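/- arXiv:2502.09760 — 2 statements merged into one kernel-verified Lean document; each statement's English description precedes it below -/
import Mathlib

section
/- Let p ≥ 1, m ≥ 0, s > 0 with (s - m)p > d. Then the set W_P(C,s) = { x : |x_k| ≤ C/|k|^s for k ≠ 0, |x_0| ≤ C } is a compact subset of the weighted sequence space 𝒲^{m,p} with norm ‖x‖ = (∑_{i=0}^m ∑_{k∈ℤ^d} |k|^{ip} |x_k|^p)^{1/p}. -/
open scoped BigOperators ENNReal

noncomputable def znorm {d : ℕ} (k : Fin d → ℤ) : ℝ := ‖(fun i => (k i : ℝ) : Fin d → ℝ)‖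

/-- The modified norm on `ℤ^d`: the norm of `k` for `k ≠ 0`, and `|0| := 1`. -/
noncomputable def mnorm {d : ℕ} (k : Fin d → ℤ) : ℝ := if k = 0 then 1 else znorm k

/-!
With `b_k = C / |k|^s` and `g_k = (∑_{i≤m} |k|^{ip})^{1/p}`, the set is exactly the order box
`{y ∈ ℓ^p : |y_k| ≤ g_k b_k}`, and `(g_k b_k)^p ≤ (m+1) C^p |k|^{-(s-m)p}` is summable over `ℤ^d`
because `(s-m)p > d` (a lattice `p`-series). An order box with `p`-summable bounds in `ℓ^p` is
compact: it is the image of the compact product of the balls of radii `g_k b_k`, and this map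
into `ℓ^p` is continuous by dominated convergence for series.
-/

open Module Filter Topology

namespace lp

variable {ι : Type*} {E : ι → Type*} [∀ i, NormedAddCommGroup (E i)] {p : ℝ≥0∞} [Fact (1 ≤ p)]

theorem tendsto_of_tendsto_apply_of_norm_le {α : Type*} {l : Filter α} (hp : p ≠ ∞)
    {F : α → lp E p} {f : lp E p} {w : ι → ℝ} (hw : Summable fun i => w i ^ p.toReal)
    (hF : ∀ i, Tendsto (fun a => F a i) l (𝓝 (f i))) (hFw : ∀ᶠ a in l, ∀ i, ‖F a i‖ ≤ w i) :
    Tendsto F l (𝓝 f) := by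
  rcases l.eq_or_neBot with rfl | _
  · exact tendsto_bot
  have hp0 : 0 < p.toReal := ENNReal.toReal_pos (zero_lt_one.trans_le Fact.out).ne' hp
  have hfw (i : ι) : ‖f i‖ ≤ w i :=
    le_of_tendsto (tendsto_norm.comp (hF i)) (hFw.mono fun a ha => ha i)
  have hdom : Summable fun i => (2 * w i) ^ p.toReal :=
    (hw.mul_left (2 ^ p.toReal)).congr fun i =>
      (Real.mul_rpow zero_le_two ((norm_nonneg _).trans (hfw i))).symm
  have hrpow : Tendsto (fun a => ‖F a - f‖ ^ p.toReal) l (𝓝 0) := by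
    simp only [lp.norm_rpow_eq_tsum hp0, lp.coeFn_sub, Pi.sub_apply]
    rw [← tsum_zero]
    refine tendsto_tsum_of_dominated_convergence hdom (fun i => ?_) ?_
    · have := ((hF i).sub_const (f i)).norm.rpow_const (p := p.toReal) (Or.inr hp0.le)
      simpa [Real.zero_rpow hp0.ne'] using this
    · filter_upwards [hFw] with a ha i
      rw [Real.norm_of_nonneg (by positivity), two_mul]
      exact Real.rpow_le_rpow (norm_nonneg _)
        ((norm_sub_le _ _).trans (add_le_add (ha i) (hfw i))) hp0.le
  rw [tendsto_iff_norm_sub_tendsto_zero]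
  have := hrpow.rpow_const (p := p.toReal⁻¹) (Or.inr (inv_nonneg.2 hp0.le))
  simpa [Real.zero_rpow (inv_ne_zero hp0.ne'), Real.rpow_rpow_inv (norm_nonneg _) hp0.ne']
    using this

theorem isCompact_setOf_norm_le [∀ i, ProperSpace (E i)] (hp : p ≠ ∞) {w : ι → ℝ}
    (hw : Summable fun i => w i ^ p.toReal) : IsCompact {f : lp E p | ∀ i, ‖f i‖ ≤ w i} := by
  have hp0 : 0 < p.toReal := ENNReal.toReal_pos (zero_lt_one.trans_le Fact.out).ne' hp
  set B : Set (∀ i, E i) := Set.univ.pi fun i => Metric.closedBall 0 (w i)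
  have hB : ∀ x ∈ B, ∀ i, ‖x i‖ ≤ w i := fun x hx i => by simpa using hx i trivial
  have : CompactSpace B :=
    isCompact_iff_compactSpace.1 (isCompact_univ_pi fun i => isCompact_closedBall 0 (w i))
  let Φ : B → lp E p := fun x => ⟨(x : ∀ i, E i), memℓp_gen <|
    hw.of_nonneg_of_le (fun i => by positivity)
      fun i => Real.rpow_le_rpow (norm_nonneg _) (hB x x.2 i) hp0.le⟩
  have hΦ : Continuous Φ := continuous_iff_continuousAt.2 fun x =>
    tendsto_of_tendsto_apply_of_norm_le hp hw
      (fun i => ((continuous_apply i).comp continuous_subtype_val).tendsto x)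
      (Eventually.of_forall fun y => hB y y.2)
  convert isCompact_range hΦ
  ext f
  refine ⟨fun hf => ⟨⟨f, fun i _ => by simpa using hf i⟩, rfl⟩, ?_⟩
  rintro ⟨x, rfl⟩
  exact hB x x.2

end lp

theorem exists_abs_le_and_eq_mul_iff {ι : Type*} {g b y : ι → ℝ} (hg : ∀ i, 0 < g i) :
    (∃ x : ι → ℝ, (∀ i, |x i| ≤ b i) ∧ ∀ i, y i = g i * x i) ↔ ∀ i, |y i| ≤ g i * b i := by
  constructor
  · rintro ⟨x, hxb, hy⟩ i
    rw [hy i, abs_mul, abs_of_pos (hg i)]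
    exact mul_le_mul_of_nonneg_left (hxb i) (hg i).le
  · refine fun hy => ⟨fun i => y i / g i, fun i => ?_, fun i => (mul_div_cancel₀ _ (hg i).ne').symm⟩
    rw [abs_div, abs_of_pos (hg i), div_le_iff₀' (hg i)]
    exact hy i

section WeightedSequences

variable {d : ℕ}

theorem summable_znorm_rpow {r : ℝ} (hr : r < -d) :
    Summable fun k : Fin d → ℤ => znorm k ^ r := by
  let L := Submodule.span ℤ (Set.range (Pi.basisFun ℝ (Fin d)))
  have hrank : finrank ℤ L = d := by simp [L, ZLattice.rank ℝ L]
  let embed : (Fin d → ℤ) → L := fun k =>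
    ⟨fun j => (k j : ℝ), ((Pi.basisFun ℝ (Fin d)).mem_span_iff_repr_mem ℤ _).2 fun j => by simp⟩
  have hembed : Function.Injective embed := fun k l hkl => by
    ext j
    simpa [embed] using congr_fun (congrArg Subtype.val hkl) j
  have hL : r < -(finrank ℤ L : ℝ) := by rwa [hrank]
  exact ((ZLattice.summable_norm_rpow L r hL).comp_injective hembed).congr fun k => rfl

theorem summable_mnorm_rpow {r : ℝ} (hr : r < -d) :
    Summable fun k : Fin d → ℤ => mnorm k ^ r := by
  refine (summable_znorm_rpow hr).congr_cofinite ?_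
  filter_upwards [Set.finite_singleton (0 : Fin d → ℤ) |>.compl_mem_cofinite] with k hk
  simp [mnorm, show k ≠ 0 from hk]

theorem one_le_mnorm (k : Fin d → ℤ) : 1 ≤ mnorm k := by
  unfold mnorm
  split_ifs with hk
  · exact le_rfl
  obtain ⟨i, hi⟩ := Function.ne_iff.1 hk
  calc (1 : ℝ) ≤ |(k i : ℝ)| := mod_cast Int.one_le_abs hi
    _ ≤ znorm k := norm_le_pi_norm (fun i => (k i : ℝ)) i

theorem mnorm_pos (k : Fin d → ℤ) : 0 < mnorm k := zero_lt_one.trans_le (one_le_mnorm k)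

theorem forall_abs_le_div_mnorm_rpow_iff {x : (Fin d → ℤ) → ℝ} {C s : ℝ} :
    (∀ k, |x k| ≤ C / mnorm k ^ s) ↔ (∀ k ≠ 0, |x k| ≤ C / znorm k ^ s) ∧ |x 0| ≤ C := by
  refine ⟨fun h => ⟨fun k hk => by simpa [mnorm, hk] using h k, by simpa [mnorm] using h 0⟩, ?_⟩
  rintro ⟨hne, h0⟩ k
  by_cases hk : k = 0
  · simpa [mnorm, hk] using h0
  · simpa [mnorm, hk] using hne k hk

noncomputable def sobolevWeight (m : ℕ) (p : ℝ) (k : Fin d → ℤ) : ℝ :=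
  (∑ i ∈ Finset.range (m + 1), mnorm k ^ ((i : ℝ) * p)) ^ (1 / p)

theorem sobolevWeight_pos (m : ℕ) (p : ℝ) (k : Fin d → ℤ) : 0 < sobolevWeight m p k :=
  Real.rpow_pos_of_pos (Finset.sum_pos (fun i _ => Real.rpow_pos_of_pos (mnorm_pos k) _)
    ⟨0, by simp⟩) _

theorem sobolevWeight_rpow_le (m : ℕ) {p : ℝ} (hp : 0 < p) (k : Fin d → ℤ) :
    sobolevWeight m p k ^ p ≤ (m + 1) * mnorm k ^ ((m : ℝ) * p) := by
  have hsum : 0 ≤ ∑ i ∈ Finset.range (m + 1), mnorm k ^ ((i : ℝ) * p) :=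
    Finset.sum_nonneg fun i _ => (Real.rpow_pos_of_pos (mnorm_pos k) _).le
  rw [sobolevWeight, ← Real.rpow_mul hsum, one_div, inv_mul_cancel₀ hp.ne',
    Real.rpow_one]
  calc ∑ i ∈ Finset.range (m + 1), mnorm k ^ ((i : ℝ) * p)
      ≤ (Finset.range (m + 1)).card • mnorm k ^ ((m : ℝ) * p) := by
        refine Finset.sum_le_card_nsmul _ _ _ fun i hi => ?_
        refine Real.rpow_le_rpow_of_exponent_le (one_le_mnorm k)
          (mul_le_mul_of_nonneg_right ?_ hp.le)
        exact_mod_cast Finset.mem_range_succ_iff.1 hi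
    _ = (m + 1) * mnorm k ^ ((m : ℝ) * p) := by
        rw [Finset.card_range, nsmul_eq_mul]
        push_cast
        ring

theorem summable_sobolevWeight_mul_rpow (m : ℕ) {p C s : ℝ} (hp : 0 < p) (hC : 0 ≤ C)
    (hsp : d < (s - m) * p) :
    Summable fun k : Fin d → ℤ => (sobolevWeight m p k * (C / mnorm k ^ s)) ^ p := by
  refine ((summable_mnorm_rpow (r := -((s - m) * p)) (by linarith)).mul_left
    ((m + 1) * C ^ p)).of_nonneg_of_le (fun k => ?_) fun k => ?_
  · have := sobolevWeight_pos m p k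
    have := mnorm_pos k
    positivity
  have hM := mnorm_pos k
  calc (sobolevWeight m p k * (C / mnorm k ^ s)) ^ p
      = sobolevWeight m p k ^ p * (C ^ p * mnorm k ^ (-(s * p))) := by
        rw [Real.mul_rpow (sobolevWeight_pos m p k).le (by positivity),
          Real.div_rpow hC (by positivity), ← Real.rpow_mul hM.le, Real.rpow_neg hM.le,
          div_eq_mul_inv]
    _ ≤ (m + 1) * mnorm k ^ ((m : ℝ) * p) * (C ^ p * mnorm k ^ (-(s * p))) := by
        gcongr
        exact sobolevWeight_rpow_le m hp k
    _ = (m + 1) * C ^ p * mnorm k ^ (-((s - m) * p)) := by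
        rw [show -((s - m) * p) = (m : ℝ) * p + -(s * p) by ring, Real.rpow_add hM]
        ring

end WeightedSequences

/-- `𝒲^{m,p}` is realized isometrically inside `ℓ^p(ℤ^d)` via the weighting
`x_k ↦ (∑_{i=0}^m |k|^{ip})^{1/p} x_k`. -/
theorem stmt7_general {d : ℕ} (m : ℕ) (p : ℝ≥0∞) [hp : Fact (1 ≤ p)] (hp' : p ≠ ∞)
    (C s : ℝ) (hC : 0 < C) (hsp : (d : ℝ) < (s - m) * p.toReal) :
    IsCompact {y : lp (fun _ : Fin d → ℤ => ℝ) p | ∃ x : (Fin d → ℤ) → ℝ,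
      (∀ k : Fin d → ℤ, k ≠ 0 → |x k| ≤ C / znorm k ^ s) ∧ |x 0| ≤ C ∧
      ∀ k : Fin d → ℤ,
        (y : (Fin d → ℤ) → ℝ) k =
          (∑ i ∈ Finset.range (m + 1), mnorm k ^ ((i : ℝ) * p.toReal)) ^ (1 / p.toReal)
            * x k} := by
  have hp0 : 0 < p.toReal := ENNReal.toReal_pos (zero_lt_one.trans_le hp.out).ne' hp'
  convert lp.isCompact_setOf_norm_le (E := fun _ : Fin d → ℤ => ℝ) hp'
    (summable_sobolevWeight_mul_rpow m hp0 hC.le hsp) using 1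
  ext y
  simp only [Set.mem_ofPred_eq, ← and_assoc, ← forall_abs_le_div_mnorm_rpow_iff, Real.norm_eq_abs]
  exact exists_abs_le_and_eq_mul_iff (sobolevWeight_pos m p.toReal)

/-- `W_P(C,s)` is compact in the weighted sequence space `𝒲^{m,p}` with norm
`‖x‖ = (∑_{i=0}^m ∑_k |k|^{ip} |x_k|^p)^{1/p}`, provided `(s-m)p > d`.
We realize `𝒲^{m,p}` isometrically inside `ℓ^p(ℤ^d)` via the weighting
`x_k ↦ (∑_{i=0}^m |k|^{ip})^{1/p} x_k`, and state compactness of the image of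
`W_P(C,s)` under this isometry. -/
theorem stmt7 {d : ℕ} (hd : 1 ≤ d) (m : ℕ) (p : ℝ≥0∞) [hp : Fact (1 ≤ p)] (hp' : p ≠ ∞)
    (C s : ℝ) (hC : 0 < C) (hs : 0 < s) (hsp : (d : ℝ) < (s - m) * p.toReal) :
    IsCompact {y : lp (fun _ : Fin d → ℤ => ℝ) p | ∃ x : (Fin d → ℤ) → ℝ,
      (∀ k : Fin d → ℤ, k ≠ 0 → |x k| ≤ C / znorm k ^ s) ∧ |x 0| ≤ C ∧
      ∀ k : Fin d → ℤ,
        (y : (Fin d → ℤ) → ℝ) k =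
          (∑ i ∈ Finset.range (m + 1), mnorm k ^ ((i : ℝ) * p.toReal)) ^ (1 / p.toReal)
            * x k} :=
  stmt7_general m p (hp := hp) hp' C s hC hsp
end

section
/- Each coordinate function N_k : W_P(C,s) → ℂ of the polynomial nonlinearity is continuous with respect to the product (pointwise-convergence) topology on W_P(C,s), provided s > d + r. -/
open scoped BigOperators

/-- The `v`-th Fourier coefficient `i^{|b|} v^b u_v` of the derivative `D^b u`. -/
noncomputable def fac {d : ℕ} (u : (Fin d → ℤ) → ℂ) (b : Fin d → ℕ) (v : Fin d → ℤ) : ℂ :=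
  Complex.I ^ (∑ i, b i) * (∏ i, ((v i : ℂ)) ^ b i) * u v

/-!
Write `⟨w⟩ = max 1 |w|_∞`. On `W_P(C,s)` every factor of a monomial obeys
`‖fac u b w‖ ≤ C ⟨w⟩^{r-s}`, and `∑_w ⟨w⟩^{-p}` converges for `p > d` because
`⟨w⟩^{-p} ≤ ∏ᵢ ⟨wᵢ⟩^{-p/d}` splits into one-dimensional `p`-series. So the series defining `N_k`
is dominated, uniformly on `W_P(C,s)`, by the summable series `∑_v ∏_m C ⟨v_m⟩^{r-s}`; each of
its terms depends on finitely many coordinates, and the Weierstrass M-test gives continuity.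
-/

open Finset

theorem summable_norm_prod_fin_pi {R : Type*} [NormedCommRing R] {n : ℕ} {X : Fin n → Type*}
    {f : ∀ i, X i → R} (hf : ∀ i, Summable fun x => ‖f i x‖) :
    Summable fun v : (∀ i, X i) => ‖∏ i, f i (v i)‖ := by
  induction n with
  | zero => exact .of_finite
  | succ n ih =>
    rw [← (Fin.consEquiv X).summable_iff]
    simpa [Function.comp_def, Fin.prod_univ_succ] using
      (hf 0).mul_norm (ih fun i => hf i.succ)

theorem summable_max_one_abs_int_rpow_neg {q : ℝ} (hq : 1 < q) :
    Summable fun n : ℤ => max 1 |(n : ℝ)| ^ (-q) := by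
  refine .of_norm_bounded_eventually (Real.summable_abs_int_rpow hq) ?_
  filter_upwards [Filter.eventually_cofinite_ne 0] with n hn
  have : (1 : ℝ) ≤ |(n : ℝ)| := by exact_mod_cast Int.one_le_abs hn
  rw [max_eq_right this, Real.norm_of_nonneg (by positivity)]

section znorm

variable {d : ℕ}

theorem znorm_nonneg (w : Fin d → ℤ) : 0 ≤ znorm w := norm_nonneg _

theorem znorm_zero : znorm (0 : Fin d → ℤ) = 0 := by
  simp [znorm, Pi.zero_def]

theorem abs_le_znorm (w : Fin d → ℤ) (i : Fin d) : |(w i : ℝ)| ≤ znorm w :=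
  norm_le_pi_norm (fun j => (w j : ℝ)) i

theorem one_le_znorm {w : Fin d → ℤ} (hw : w ≠ 0) : 1 ≤ znorm w := by
  obtain ⟨i, hi⟩ := Function.ne_iff.mp hw
  calc (1 : ℝ) ≤ |(w i : ℝ)| := by exact_mod_cast Int.one_le_abs hi
    _ ≤ znorm w := abs_le_znorm w i

theorem max_one_znorm_rpow_neg_le_prod {p : ℝ} (hp : 0 ≤ p) (w : Fin d → ℤ) :
    max 1 (znorm w) ^ (-p) ≤ ∏ i, max 1 |(w i : ℝ)| ^ (-(p / d)) := by
  rcases Nat.eq_zero_or_pos d with rfl | hd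
  · rw [znorm, Subsingleton.elim (fun i => (w i : ℝ) : Fin 0 → ℝ) 0, norm_zero]
    simp
  calc max 1 (znorm w) ^ (-p) = ∏ _i : Fin d, max 1 (znorm w) ^ (-(p / d)) := by
        rw [prod_const, card_univ, Fintype.card_fin, ← Real.rpow_mul_natCast (by positivity)]
        field_simp
    _ ≤ _ := prod_le_prod (fun _ _ => by positivity) fun i _ =>
        Real.rpow_le_rpow_of_nonpos (by positivity) (max_le_max le_rfl (abs_le_znorm w i))
          (by simp only [Left.neg_nonpos_iff]; positivity)

theorem summable_max_one_znorm_rpow_neg {p : ℝ} (hp : (d : ℝ) < p) :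
    Summable fun w : Fin d → ℤ => max 1 (znorm w) ^ (-p) := by
  rcases Nat.eq_zero_or_pos d with rfl | hd
  · exact .of_finite
  have hq : 1 < p / d := by rwa [one_lt_div (by positivity)]
  refine .of_nonneg_of_le (fun _ => by positivity)
    (max_one_znorm_rpow_neg_le_prod ((Nat.cast_nonneg d).trans hp.le))
    (summable_norm_prod_fin_pi fun _ : Fin d => (summable_max_one_abs_int_rpow_neg hq).norm).of_norm

theorem norm_le_max_one_znorm_rpow_neg {u : (Fin d → ℤ) → ℂ} {C s : ℝ}
    (hu : ∀ k : Fin d → ℤ, k ≠ 0 → ‖u k‖ ≤ C / znorm k ^ s) (hu0 : ‖u 0‖ ≤ C)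
    (w : Fin d → ℤ) : ‖u w‖ ≤ C * max 1 (znorm w) ^ (-s) := by
  rcases eq_or_ne w 0 with rfl | hw
  · simpa [znorm_zero] using hu0
  · rw [max_eq_right (one_le_znorm hw), Real.rpow_neg (znorm_nonneg w), ← div_eq_mul_inv]
    exact hu w hw

end znorm

section fac

variable {d : ℕ}

theorem norm_fac (u : (Fin d → ℤ) → ℂ) (b : Fin d → ℕ) (w : Fin d → ℤ) :
    ‖fac u b w‖ = (∏ i, |(w i : ℝ)| ^ b i) * ‖u w‖ := by
  simp [fac, norm_prod]

theorem continuous_fac (b : Fin d → ℕ) (w : Fin d → ℤ) :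
    Continuous fun u : (Fin d → ℤ) → ℂ => fac u b w :=
  continuous_const.mul (continuous_apply w)

theorem prod_abs_pow_le_max_one_znorm_pow {r : ℕ} {b : Fin d → ℕ} (hb : ∑ i, b i ≤ r)
    (w : Fin d → ℤ) : ∏ i, |(w i : ℝ)| ^ b i ≤ max 1 (znorm w) ^ r :=
  calc ∏ i, |(w i : ℝ)| ^ b i ≤ ∏ i, max 1 (znorm w) ^ b i :=
        prod_le_prod (fun _ _ => by positivity) fun i _ =>
          pow_le_pow_left₀ (abs_nonneg _) ((abs_le_znorm w i).trans (le_max_right _ _)) _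
    _ = max 1 (znorm w) ^ ∑ i, b i := prod_pow_eq_pow_sum _ _ _
    _ ≤ max 1 (znorm w) ^ r := pow_le_pow_right₀ (le_max_left _ _) hb

theorem norm_fac_le {r : ℕ} {b : Fin d → ℕ} (hb : ∑ i, b i ≤ r) {u : (Fin d → ℤ) → ℂ}
    {C s : ℝ} (hu : ∀ k : Fin d → ℤ, k ≠ 0 → ‖u k‖ ≤ C / znorm k ^ s) (hu0 : ‖u 0‖ ≤ C)
    (w : Fin d → ℤ) : ‖fac u b w‖ ≤ C * max 1 (znorm w) ^ ((r : ℝ) - s) := by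
  rw [norm_fac, sub_eq_add_neg, Real.rpow_add (by positivity), Real.rpow_natCast]
  calc (∏ i, |(w i : ℝ)| ^ b i) * ‖u w‖
      ≤ max 1 (znorm w) ^ r * (C * max 1 (znorm w) ^ (-s)) :=
        mul_le_mul (prod_abs_pow_le_max_one_znorm_pow hb w)
          (norm_le_max_one_znorm_rpow_neg hu hu0 w) (norm_nonneg _) (by positivity)
    _ = C * (max 1 (znorm w) ^ r * max 1 (znorm w) ^ (-s)) := by ring

end fac

theorem stmt15_general {d r M : ℕ} (C s : ℝ) (hs : (d : ℝ) + r < s)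
    (l : Fin M → ℕ) (a : Fin M → ℂ)
    (β : (t : Fin M) → Fin (l t) → Fin d → ℕ) (hβ : ∀ t m, (∑ i, β t m i) ≤ r)
    (k : Fin d → ℤ) :
    ContinuousOn
      (fun u : (Fin d → ℤ) → ℂ =>
        ∑ t : Fin M, a t * ∑' v : {v : Fin (l t) → (Fin d → ℤ) // ∑ m, v m = k},
          ∏ m, fac u (β t m) (v.1 m))
      {u : (Fin d → ℤ) → ℂ |
        (∀ k' : Fin d → ℤ, k' ≠ 0 → ‖u k'‖ ≤ C / znorm k' ^ s) ∧
        ‖u 0‖ ≤ C} := by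
  have hg : Summable fun w : Fin d → ℤ => C * max 1 (znorm w) ^ ((r : ℝ) - s) := by
    simpa [neg_sub] using (summable_max_one_znorm_rpow_neg (p := s - r) (by linarith)).mul_left C
  refine continuousOn_finsetSum _ fun t _ => continuousOn_const.mul ?_
  have hdom : Summable fun v : Fin (l t) → (Fin d → ℤ) =>
      ∏ m, C * max 1 (znorm (v m)) ^ ((r : ℝ) - s) :=
    (summable_norm_prod_fin_pi fun _ => hg.norm).of_norm
  refine continuousOn_tsum (fun v => (continuous_finsetProd _ fun m _ =>
    continuous_fac _ _).continuousOn) (hdom.subtype _) ?_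
  rintro v u ⟨hu, hu0⟩
  rw [norm_prod]
  exact prod_le_prod (fun _ _ => norm_nonneg _) fun m _ => norm_fac_le (hβ t m) hu hu0 _

/-- Each coordinate `N_k` of a polynomial nonlinearity (a finite sum of `M` monomials,
the `t`-th of degree `l t` with derivative multi-indices `β t m` of order `≤ r`) is
continuous on `W_P(C,s)` with respect to the product (pointwise-convergence) topology,
provided `s > d + r`. -/
theorem stmt15 {d r M : ℕ} (hd : 1 ≤ d) (C s : ℝ) (hC : 0 < C) (hs : (d : ℝ) + r < s)
    (l : Fin M → ℕ) (hl : ∀ t, 1 ≤ l t) (a : Fin M → ℂ)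
    (β : (t : Fin M) → Fin (l t) → Fin d → ℕ) (hβ : ∀ t m, (∑ i, β t m i) ≤ r)
    (k : Fin d → ℤ) :
    ContinuousOn
      (fun u : (Fin d → ℤ) → ℂ =>
        ∑ t : Fin M, a t * ∑' v : {v : Fin (l t) → (Fin d → ℤ) // ∑ m, v m = k},
          ∏ m, fac u (β t m) (v.1 m))
      {u : (Fin d → ℤ) → ℂ |
        (∀ k' : Fin d → ℤ, k' ≠ 0 → ‖u k'‖ ≤ C / znorm k' ^ s) ∧
        ‖u 0‖ ≤ C} :=
  stmt15_general C s hs l a β hβ k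
end
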